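/- Let G = (V,E) be an ℓ-layered DST instance with nonnegative edge costs c_e, and let y : E → ℝ be nonnegative and satisfy: (i) Σ_{e ∈ δ^in(v)} y_e ≤ 1 for every v ∈ V \ {r}; (ii) Σ_{e ∈ δ^in(t)} y_e ≥ 1 for every t ∈ T; and (iii) for every terminal t ∈ T, every 0 < i' < ℓ, every v' ∈ V_{i'}, every f ∈ δ^out(v') and every directed path p'' starting with the edge f and ending at t, (Σ_{e' ∈ δ^in(v')} y_{e'}) · Π_{e'' ∈ p''} y_{e''} ≥ Π_{e'' ∈ p''} y_{e''}. Define x_p := Π_{e ∈ p} y_e for every p ∈ Q. Then x is a feasible solution of DST-LP1, and its objective value satisfies Σ_{e ∈ E} Σ_{p ∈ Q(e)} c_e · x_p ≤ Σ_{e ∈ E} c_e · y_e. -/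

import Mathlib

/-!
Let `W_k(v, t)` be the total weight `∑_p ∏_{e ∈ p} y_e` of the walks `p` of length `k` from `v`
to `t`. A path of `Q(t)` extending `p'` is `p'` followed by such a walk, so every quantity in
DST-LP1 is `x_{p'}` (or `c_e y_e`) times some `W`. Splitting off the last edge,
`W_{k+1}(v, t) = ∑_{e ∈ δ^in(t)} W_k(v, e₁) y_e`, so the in-degree bound (i) gives `W ≤ 1`;
this is the subpath constraint and the objective bound. Splitting off the first edge and
summing over a layer, `∑_{v ∈ V_i} W_{ℓ-i}(v, t) = ∑_{w ∈ V_{i+1}} y(δ^in(w)) W_{ℓ-i-1}(w, t)`,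
which by (ii) and (iii) dominates the same sum for `V_{i+1}`. Descending from `V_ℓ`, where the
sum is `1`, to `V_0 = {r}` gives the covering constraint `W_ℓ(r, t) ≥ 1`.
-/

/-- An `ℓ`-layered instance of the Directed Steiner Tree problem on the (finite)
vertex type `V`: a root `r`, a terminal set `T`, an edge set `E`, and a layering
function `layer` partitioning `V` into layers `V_0, …, V_ℓ` with `V_0 = {r}`,
`V_ℓ = T`, and every edge going from some layer `V_i` to `V_{i+1}`. -/
structure LayeredDST (V : Type) [Fintype V] [DecidableEq V] where
  ℓ : ℕ
  E : Finset (V × V)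
  r : V
  T : Finset V
  layer : V → ℕ
  layer_le : ∀ v : V, layer v ≤ ℓ
  layer_root : ∀ v : V, layer v = 0 ↔ v = r
  layer_terminal : ∀ v : V, layer v = ℓ ↔ v ∈ T
  edge_layer : ∀ e ∈ E, layer e.2 = layer e.1 + 1

/-- Product of `y` over the edges of a path `p` (encoded as its list of edges);
the empty product is `1`. -/
def pathProd {V : Type} (y : V × V → ℝ) (p : List (V × V)) : ℝ := (p.map y).prod

namespace LayeredDST

variable {V : Type} [Fintype V] [DecidableEq V] (G : LayeredDST V)

/-- `p` is a directed walk in `G`, encoded as its list of edges: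
all edges belong to `E` and consecutive edges are incident. -/
def IsWalk (p : List (V × V)) : Prop :=
  (∀ e ∈ p, e ∈ G.E) ∧ p.Chain' (fun e f => e.2 = f.1)

/-- `p` is a directed path (walk) in `G` starting at the vertex `v`. -/
def IsPathFrom (v : V) (p : List (V × V)) : Prop :=
  G.IsWalk p ∧ ∀ e ∈ p.head?, e.1 = v

/-- `p` is a directed path in `G` starting at the root `r`. -/
def IsPath (p : List (V × V)) : Prop := G.IsPathFrom G.r p

/-- The endpoint of a path starting at the root (the root itself for the trivial path). -/
def pathEnd (p : List (V × V)) : V := (p.getLast?).elim G.r Prod.snd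

/-- `Q`: the set of all directed paths starting at the root. -/
def Q : Set (List (V × V)) := {p | G.IsPath p}

/-- `Q(v)`: the set of directed paths from the root `r` to `v`. -/
def Qv (v : V) : Set (List (V × V)) := {p | G.IsPath p ∧ G.pathEnd p = v}

/-- `Q(e)`: the set of directed paths from the root whose last edge is `e`. -/
def Qe (e : V × V) : Set (List (V × V)) := {p | G.IsPath p ∧ p.getLast? = some e}

/-- `δ^in(v)`: the set of edges of `E` entering `v`. -/
def inEdges (v : V) : Finset (V × V) := G.E.filter (fun e => e.2 = v)

/-- `δ^out(v)`: the set of edges of `E` leaving `v`. -/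
def outEdges (v : V) : Finset (V × V) := G.E.filter (fun e => e.1 = v)

/-- Feasibility for the linear program (DST-LP1): nonnegativity, the covering
constraints `∑_{p ∈ Q(t)} x_p ≥ 1` for each terminal `t`, and the subpath
constraints `∑_{p ∈ Q(t), p' ⊆ p} x_p ≤ x_{p'}` for each terminal `t` and `p' ∈ Q`. -/
def FeasibleLP1 (x : List (V × V) → ℝ) : Prop :=
  (∀ p ∈ G.Q, 0 ≤ x p) ∧
  (∀ t ∈ G.T, 1 ≤ ∑ᶠ p ∈ G.Qv t, x p) ∧
  (∀ t ∈ G.T, ∀ p' ∈ G.Q, (∑ᶠ p ∈ {p ∈ G.Qv t | p' <+: p}, x p) ≤ x p')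

/-- The objective function of (DST-LP1): `∑_{e ∈ E} ∑_{p ∈ Q(e)} c_e · x_p`. -/
noncomputable def objLP1 (c : V × V → ℝ) (x : List (V × V) → ℝ) : ℝ :=
  ∑ e ∈ G.E, ∑ᶠ p ∈ G.Qe e, c e * x p

end LayeredDST

namespace LayeredDST

section Lists

variable {V : Type}

def walkEnd (v : V) (p : List (V × V)) : V := p.getLast?.elim v Prod.snd

@[simp] lemma walkEnd_nil (v : V) : walkEnd v [] = v := rfl

lemma walkEnd_cons (v : V) (e : V × V) (p : List (V × V)) :
    walkEnd v (e :: p) = walkEnd e.2 p := by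
  cases p with
  | nil => rfl
  | cons f p => simp [walkEnd, List.getLast?_cons]

lemma walkEnd_append (v : V) (p q : List (V × V)) :
    walkEnd v (p ++ q) = walkEnd (walkEnd v p) q := by
  induction p generalizing v with
  | nil => rfl
  | cons e p ih => rw [List.cons_append, walkEnd_cons, walkEnd_cons, ih]

lemma getLast?_snd_eq_of_walkEnd_eq {v t : V} {p : List (V × V)} (h : walkEnd v p = t) :
    ∀ e ∈ p.getLast?, e.2 = t := by
  intro e he
  simp [← h, walkEnd, Option.mem_def.mp he]

lemma pathProd_cons (y : V × V → ℝ) (e : V × V) (p : List (V × V)) :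
    pathProd y (e :: p) = y e * pathProd y p := by
  simp [pathProd]

lemma pathProd_append (y : V × V → ℝ) (p q : List (V × V)) :
    pathProd y (p ++ q) = pathProd y p * pathProd y q := by
  simp [pathProd]

lemma pathProd_nonneg {y : V × V → ℝ} {p : List (V × V)} (h : ∀ e ∈ p, 0 ≤ y e) :
    0 ≤ pathProd y p :=
  List.prod_nonneg fun _ ha => by
    obtain ⟨e, he, rfl⟩ := List.mem_map.mp ha
    exact h e he

end Lists

variable {V : Type} [Fintype V] [DecidableEq V] (G : LayeredDST V)

lemma pathEnd_eq_walkEnd (p : List (V × V)) : G.pathEnd p = walkEnd G.r p := rfl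

@[simp] lemma layer_r : G.layer G.r = 0 := (G.layer_root G.r).mpr rfl

lemma isWalk_iff {p : List (V × V)} :
    G.IsWalk p ↔ (∀ e ∈ p, e ∈ G.E) ∧ p.IsChain (fun e f => e.2 = f.1) :=
  Iff.rfl

@[simp] lemma isPathFrom_nil (v : V) : G.IsPathFrom v [] :=
  ⟨⟨by simp, List.IsChain.nil⟩, by simp⟩

lemma isPathFrom_cons {v : V} {e : V × V} {p : List (V × V)} :
    G.IsPathFrom v (e :: p) ↔ e ∈ G.E ∧ e.1 = v ∧ G.IsPathFrom e.2 p := by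
  simp only [IsPathFrom, isWalk_iff, List.isChain_cons, List.forall_mem_cons, List.head?_cons,
    Option.mem_def, Option.some.injEq, forall_eq']
  constructor
  · rintro ⟨⟨⟨he, hp⟩, hhead, hchain⟩, rfl⟩
    exact ⟨he, rfl, ⟨hp, hchain⟩, fun f hf => (hhead f hf).symm⟩
  · rintro ⟨he, rfl, ⟨hp, hchain⟩, hhead⟩
    exact ⟨⟨⟨he, hp⟩, fun f hf => (hhead f hf).symm, hchain⟩, rfl⟩

lemma isPathFrom_append {v : V} {p q : List (V × V)} :
    G.IsPathFrom v (p ++ q) ↔ G.IsPathFrom v p ∧ G.IsPathFrom (walkEnd v p) q := by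
  induction p generalizing v with
  | nil => simp
  | cons e p ih => simp only [List.cons_append, isPathFrom_cons, ih, walkEnd_cons, and_assoc]

lemma layer_walkEnd {v : V} {p : List (V × V)} (h : G.IsPathFrom v p) :
    G.layer (walkEnd v p) = G.layer v + p.length := by
  induction p generalizing v with
  | nil => simp
  | cons e p ih =>
    obtain ⟨he, rfl, hp⟩ := G.isPathFrom_cons.mp h
    rw [walkEnd_cons, ih hp, G.edge_layer e he, List.length_cons]
    ring

def walks : ℕ → V → Finset (List (V × V))
  | 0, _ => {[]}
  | n + 1, v => (G.outEdges v).biUnion fun e => (walks n e.2).image (e :: ·)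

lemma mem_walks {n : ℕ} {v : V} {p : List (V × V)} :
    p ∈ G.walks n v ↔ G.IsPathFrom v p ∧ p.length = n := by
  induction n generalizing v p with
  | zero => cases p <;> simp [walks]
  | succ n ih =>
    cases p with
    | nil => simp [walks]
    | cons e p =>
      obtain ⟨a, b⟩ := e
      simp only [walks, outEdges, Finset.mem_biUnion, Finset.mem_filter, Finset.mem_image, ih,
        List.cons.injEq, exists_eq_right_right, isPathFrom_cons, List.length_cons,
        Nat.add_right_cancel_iff]
      tauto

def walksTo (n : ℕ) (v u : V) : Finset (List (V × V)) :=
  (G.walks n v).filter (walkEnd v · = u)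

lemma mem_walksTo {n : ℕ} {v u : V} {p : List (V × V)} :
    p ∈ G.walksTo n v u ↔ (G.IsPathFrom v p ∧ p.length = n) ∧ walkEnd v p = u := by
  rw [walksTo, Finset.mem_filter, mem_walks]

noncomputable def walkWeight (y : V × V → ℝ) (n : ℕ) (v u : V) : ℝ :=
  ∑ p ∈ G.walksTo n v u, pathProd y p

variable {G}

lemma walkWeight_zero (y : V × V → ℝ) (v u : V) :
    G.walkWeight y 0 v u = if v = u then 1 else 0 := by
  by_cases h : v = u <;> simp [walkWeight, walksTo, walks, Finset.filter_singleton, h, pathProd]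

lemma walkWeight_succ (y : V × V → ℝ) (n : ℕ) (v u : V) :
    G.walkWeight y (n + 1) v u = ∑ e ∈ G.outEdges v, y e * G.walkWeight y n e.2 u := by
  rw [walkWeight, walksTo, walks, Finset.filter_biUnion, Finset.sum_biUnion]
  · refine Finset.sum_congr rfl fun e _ => ?_
    rw [Finset.filter_image, Finset.sum_image (by simp), walkWeight, Finset.mul_sum]
    simp only [walkEnd_cons, pathProd_cons, walksTo]
  · intro e _ f _ hef
    simp only [Function.onFun, Finset.disjoint_left, Finset.mem_filter, Finset.mem_image]
    rintro _ ⟨⟨p, _, rfl⟩, -⟩ ⟨⟨q, _, h⟩, -⟩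
    exact hef (List.cons_eq_cons.mp h).1.symm

lemma walkWeight_succ' (y : V × V → ℝ) (n : ℕ) (v u : V) :
    G.walkWeight y (n + 1) v u = ∑ e ∈ G.inEdges u, G.walkWeight y n v e.1 * y e := by
  induction n generalizing v with
  | zero =>
    simp only [walkWeight_succ, walkWeight_zero, mul_ite, ite_mul, mul_one, one_mul, mul_zero,
      zero_mul, outEdges, inEdges, Finset.sum_filter]
    exact Finset.sum_congr rfl fun e _ => by split_ifs <;> simp_all [eq_comm]
  | succ n ih =>
    simp only [walkWeight_succ y (n + 1), ih, Finset.mul_sum, walkWeight_succ y n, Finset.sum_mul]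
    rw [Finset.sum_comm]
    exact Finset.sum_congr rfl fun f _ => Finset.sum_congr rfl fun e _ => by ring

lemma inEdges_r : G.inEdges G.r = ∅ := by
  ext e
  simp only [inEdges, Finset.mem_filter, Finset.notMem_empty, iff_false, not_and]
  intro he hr
  have := G.edge_layer e he
  simp_all

lemma walkWeight_le_one {y : V × V → ℝ} (hy : ∀ e ∈ G.E, 0 ≤ y e)
    (hdeg : ∀ v : V, v ≠ G.r → (∑ e ∈ G.inEdges v, y e) ≤ 1) (n : ℕ) (v u : V) :
    G.walkWeight y n v u ≤ 1 := by
  induction n generalizing u with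
  | zero => rw [walkWeight_zero]; split_ifs <;> norm_num
  | succ n ih =>
    rw [walkWeight_succ']
    by_cases hu : u = G.r
    · simp [hu, inEdges_r]
    calc ∑ e ∈ G.inEdges u, G.walkWeight y n v e.1 * y e
        ≤ ∑ e ∈ G.inEdges u, y e := Finset.sum_le_sum fun e he =>
          mul_le_of_le_one_left (hy e (Finset.mem_filter.mp he).1) (ih e.1)
      _ ≤ 1 := hdeg u hu

variable (G) in
lemma sum_sum_outEdges (s : Finset V) (F : V × V → ℝ) :
    ∑ v ∈ s, ∑ e ∈ G.outEdges v, F e = ∑ e ∈ G.E with e.1 ∈ s, F e :=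
  Finset.sum_fiberwise_eq_sum_filter G.E s Prod.fst F

variable (G) in
lemma sum_sum_inEdges (s : Finset V) (F : V × V → ℝ) :
    ∑ v ∈ s, ∑ e ∈ G.inEdges v, F e = ∑ e ∈ G.E with e.2 ∈ s, F e :=
  Finset.sum_fiberwise_eq_sum_filter G.E s Prod.snd F

lemma sum_layer_walkWeight_succ (y : V × V → ℝ) (j k : ℕ) (t : V) :
    ∑ v with G.layer v = j, G.walkWeight y (k + 1) v t
      = ∑ w with G.layer w = j + 1, (∑ e ∈ G.inEdges w, y e) * G.walkWeight y k w t := by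
  calc ∑ v with G.layer v = j, G.walkWeight y (k + 1) v t
      = ∑ e ∈ G.E with e.1 ∈ ({v | G.layer v = j} : Finset V),
          y e * G.walkWeight y k e.2 t := by
        simp only [walkWeight_succ, sum_sum_outEdges]
    _ = ∑ e ∈ G.E with e.2 ∈ ({w | G.layer w = j + 1} : Finset V),
          y e * G.walkWeight y k e.2 t := by
        refine Finset.sum_congr (Finset.filter_congr fun e he => ?_) fun _ _ => rfl
        simp [G.edge_layer e he]
    _ = _ := by
        rw [← sum_sum_inEdges]
        refine Finset.sum_congr rfl fun w _ => ?_
        rw [Finset.sum_mul]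
        exact Finset.sum_congr rfl fun e he => by rw [(Finset.mem_filter.mp he).2]

lemma one_le_sum_layer_walkWeight {y : V × V → ℝ} {t : V}
    (hin : ∀ w, 0 < G.layer w → G.layer w ≤ G.layer t →
      G.walkWeight y (G.layer t - G.layer w) w t
        ≤ (∑ e ∈ G.inEdges w, y e) * G.walkWeight y (G.layer t - G.layer w) w t) :
    ∀ k ≤ G.layer t, 1 ≤ ∑ v with G.layer v = G.layer t - k, G.walkWeight y k v t := by
  intro k
  induction k with
  | zero => intro; simp [walkWeight_zero, Finset.sum_ite_eq']
  | succ k ih =>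
    intro hk
    calc (1 : ℝ) ≤ ∑ w with G.layer w = G.layer t - k, G.walkWeight y k w t := ih (by omega)
      _ ≤ ∑ w with G.layer w = G.layer t - k,
            (∑ e ∈ G.inEdges w, y e) * G.walkWeight y k w t := by
          refine Finset.sum_le_sum fun w hw => ?_
          have hlw : G.layer w = G.layer t - k := (Finset.mem_filter.mp hw).2
          have hk' : G.layer t - G.layer w = k := by omega
          simpa only [hk'] using hin w (by omega) (by omega)
      _ = _ := by
          rw [sum_layer_walkWeight_succ, show G.layer t - (k + 1) + 1 = G.layer t - k by omega]

lemma one_le_walkWeight_r {y : V × V → ℝ} {t : V}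
    (hin : ∀ w, 0 < G.layer w → G.layer w ≤ G.layer t →
      G.walkWeight y (G.layer t - G.layer w) w t
        ≤ (∑ e ∈ G.inEdges w, y e) * G.walkWeight y (G.layer t - G.layer w) w t) :
    1 ≤ G.walkWeight y (G.layer t) G.r t := by
  simpa [G.layer_root, Finset.filter_eq'] using one_le_sum_layer_walkWeight hin _ le_rfl

lemma walkWeight_le_sum_inEdges_mul {y : V × V → ℝ} {t w : V}
    (hterm : ∀ t ∈ G.T, 1 ≤ ∑ e ∈ G.inEdges t, y e)
    (hSA : ∀ v' : V, 0 < G.layer v' → G.layer v' < G.ℓ →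
      ∀ f ∈ G.outEdges v', ∀ p'' : List (V × V), G.IsWalk p'' →
        p''.head? = some f → (∀ e ∈ p''.getLast?, e.2 = t) →
        pathProd y p'' ≤ (∑ e' ∈ G.inEdges v', y e') * pathProd y p'')
    (ht : t ∈ G.T) (hw : 0 < G.layer w) :
    G.walkWeight y (G.layer t - G.layer w) w t
      ≤ (∑ e ∈ G.inEdges w, y e) * G.walkWeight y (G.layer t - G.layer w) w t := by
  rw [(G.layer_terminal t).mpr ht]
  rcases (G.layer_le w).eq_or_lt with hwℓ | hwℓ
  · have hwT : w ∈ G.T := (G.layer_terminal w).mp hwℓ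
    refine le_mul_of_one_le_left ?_ (hterm w hwT)
    rw [hwℓ, Nat.sub_self, walkWeight_zero]
    split_ifs <;> norm_num
  · rw [walkWeight, Finset.mul_sum]
    refine Finset.sum_le_sum fun p hp => ?_
    obtain ⟨⟨hpw, hlen⟩, hend⟩ := G.mem_walksTo.mp hp
    obtain _ | ⟨f, q⟩ := p
    · simp only [List.length_nil] at hlen
      omega
    obtain ⟨hf, hfw, -⟩ := G.isPathFrom_cons.mp hpw
    exact hSA w hw hwℓ f (Finset.mem_filter.mpr ⟨hf, hfw⟩) _ hpw.1 rfl
      (getLast?_snd_eq_of_walkEnd_eq hend)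

lemma prefix_Qv_eq_image {p' : List (V × V)} (hp' : G.IsPath p') (u : V) :
    {p ∈ G.Qv u | p' <+: p}
      = (p' ++ ·) '' ↑(G.walksTo (G.layer u - G.layer (G.pathEnd p')) (G.pathEnd p') u) := by
  have hlayer := G.layer_walkEnd hp'
  ext p
  simp only [Qv, IsPath, pathEnd_eq_walkEnd, Set.mem_ofPred_eq, Set.mem_image, Finset.mem_coe,
    mem_walksTo] at hlayer ⊢
  constructor
  · rintro ⟨⟨hp, hpu⟩, q, rfl⟩
    rw [isPathFrom_append] at hp
    rw [walkEnd_append] at hpu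
    have := G.layer_walkEnd hp.2
    rw [hpu] at this
    exact ⟨q, ⟨⟨hp.2, by omega⟩, hpu⟩, rfl⟩
  · rintro ⟨q, ⟨⟨hq, -⟩, hqu⟩, rfl⟩
    exact ⟨⟨G.isPathFrom_append.mpr ⟨hp', hq⟩, by rw [walkEnd_append, hqu]⟩,
      List.prefix_append p' q⟩

lemma Qv_eq_coe_walksTo (u : V) : G.Qv u = ↑(G.walksTo (G.layer u) G.r u) := by
  simpa [pathEnd_eq_walkEnd] using G.prefix_Qv_eq_image (G.isPathFrom_nil G.r) u

lemma Qe_eq_image {e : V × V} (he : e ∈ G.E) : G.Qe e = (· ++ [e]) '' G.Qv e.1 := by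
  ext p
  simp only [Qe, Qv, IsPath, pathEnd_eq_walkEnd, Set.mem_ofPred_eq, Set.mem_image]
  constructor
  · rintro ⟨hp, hlast⟩
    obtain ⟨q, rfl⟩ := List.getLast?_eq_some_iff.mp hlast
    obtain ⟨hq, he'⟩ := G.isPathFrom_append.mp hp
    exact ⟨q, ⟨hq, (G.isPathFrom_cons.mp he').2.1.symm⟩, rfl⟩
  · rintro ⟨q, ⟨hq, hqe⟩, rfl⟩
    refine ⟨G.isPathFrom_append.mpr ⟨hq, ?_⟩, by simp⟩
    exact G.isPathFrom_cons.mpr ⟨he, hqe.symm, G.isPathFrom_nil _⟩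

variable (G) in
lemma finsum_prefix_Qv_pathProd (y : V × V → ℝ) {p' : List (V × V)} (hp' : G.IsPath p')
    (u : V) :
    ∑ᶠ p ∈ {p ∈ G.Qv u | p' <+: p}, pathProd y p
      = pathProd y p' * G.walkWeight y (G.layer u - G.layer (G.pathEnd p')) (G.pathEnd p') u := by
  rw [G.prefix_Qv_eq_image hp', finsum_mem_image (List.append_right_injective p').injOn,
    finsum_mem_coe_finset, walkWeight, Finset.mul_sum]
  simp only [pathProd_append]

variable (G) in
lemma finsum_Qv_pathProd (y : V × V → ℝ) (u : V) :
    ∑ᶠ p ∈ G.Qv u, pathProd y p = G.walkWeight y (G.layer u) G.r u := by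
  rw [Qv_eq_coe_walksTo, finsum_mem_coe_finset, walkWeight]

variable (G) in
lemma finsum_Qe_pathProd (y : V × V → ℝ) {e : V × V} (he : e ∈ G.E) :
    ∑ᶠ p ∈ G.Qe e, pathProd y p = G.walkWeight y (G.layer e.1) G.r e.1 * y e := by
  rw [Qe_eq_image he, finsum_mem_image (List.append_left_injective [e]).injOn,
    ← finsum_Qv_pathProd, finsum_mem_mul]
  simp [pathProd]

end LayeredDST

/-- Suppose `y ≥ 0` satisfies (i) `∑_{e ∈ δ^in(v)} y_e ≤ 1` for
every `v ≠ r`, (ii) `∑_{e ∈ δ^in(t)} y_e ≥ 1` for every terminal `t`, and (iii)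
for every terminal `t`, every `0 < i' < ℓ`, every `v' ∈ V_{i'}`, every
`f ∈ δ^out(v')` and every directed path `p''` starting with `f` and ending at
`t`, `(∑_{e' ∈ δ^in(v')} y_{e'}) · ∏_{e'' ∈ p''} y_{e''} ≥ ∏_{e'' ∈ p''} y_{e''}`.
Then `x_p := ∏_{e ∈ p} y_e` is feasible for (DST-LP1) and its objective value is
at most `∑_{e ∈ E} c_e y_e`. -/
theorem pathProd_feasible_and_obj_le
    (V : Type) [Fintype V] [DecidableEq V] (G : LayeredDST V)
    (c : V × V → ℝ) (hc : ∀ e ∈ G.E, 0 ≤ c e)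
    (y : V × V → ℝ) (hy : ∀ e ∈ G.E, 0 ≤ y e)
    (hdeg : ∀ v : V, v ≠ G.r → (∑ e ∈ G.inEdges v, y e) ≤ 1)
    (hterm : ∀ t ∈ G.T, 1 ≤ ∑ e ∈ G.inEdges t, y e)
    (hSA : ∀ t ∈ G.T, ∀ v' : V, 0 < G.layer v' → G.layer v' < G.ℓ →
      ∀ f ∈ G.outEdges v', ∀ p'' : List (V × V), G.IsWalk p'' →
        p''.head? = some f → (∀ e ∈ p''.getLast?, e.2 = t) →
        pathProd y p'' ≤ (∑ e' ∈ G.inEdges v', y e') * pathProd y p'') :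
    G.FeasibleLP1 (pathProd y) ∧
    G.objLP1 c (pathProd y) ≤ ∑ e ∈ G.E, c e * y e := by
  have hx : ∀ p ∈ G.Q, 0 ≤ pathProd y p := fun p hp =>
    LayeredDST.pathProd_nonneg fun e he => hy e (hp.1.1 e he)
  have hle := LayeredDST.walkWeight_le_one hy hdeg
  refine ⟨⟨hx, fun t ht => ?_, fun t _ p' hp' => ?_⟩, Finset.sum_le_sum fun e he => ?_⟩
  · rw [G.finsum_Qv_pathProd]
    exact LayeredDST.one_le_walkWeight_r fun w hw _ =>
      LayeredDST.walkWeight_le_sum_inEdges_mul hterm (hSA t ht) ht hw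
  · rw [G.finsum_prefix_Qv_pathProd y hp']
    exact mul_le_of_le_one_right (hx p' hp') (hle _ _ _)
  · rw [← mul_finsum_mem, G.finsum_Qe_pathProd y he, mul_comm _ (y e), ← mul_assoc]
    exact mul_le_of_le_one_right (mul_nonneg (hc e he) (hy e he)) (hle _ _ _)
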